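/- For every G ∈ 𝓕, the one-sided Mahavier product I_G^+ has the CR-specification property. -/

import Mathlib

open Set Filter Topology

/-- One-sided Mahavier product of a relation `F` on `X`. -/
def MahavierPlus {X : Type*} (F : Set (X × X)) : Set (ℕ → X) :=
  {x | ∀ n : ℕ, (x n, x (n + 1)) ∈ F}

/-- Two-sided Mahavier product of a relation `F` on `X`. -/
def MahavierTwo {X : Type*} (F : Set (X × X)) : Set (ℤ → X) :=
  {x | ∀ n : ℤ, (x n, x (n + 1)) ∈ F}

/-- The shift map on the one-sided Mahavier product. -/
def shiftPlus {X : Type*} (F : Set (X × X)) (x : MahavierPlus F) : MahavierPlus F :=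
  ⟨fun n => (x : ℕ → X) (n + 1), fun n => x.2 (n + 1)⟩

/-- The shift map on the two-sided Mahavier product. -/
def shiftTwo {X : Type*} (F : Set (X × X)) (x : MahavierTwo F) : MahavierTwo F :=
  ⟨fun n => (x : ℤ → X) (n + 1), fun n => x.2 (n + 1)⟩

/-- The metric `D(x,y) = sup_{n ≥ 1} d(x_n, y_n)/2^n` on one-sided sequences
(coordinates are indexed from `0` here, so the weight is `2^(n+1)`). -/
noncomputable def DPlus {X : Type*} [PseudoMetricSpace X] (x y : ℕ → X) : ℝ :=
  ⨆ n : ℕ, dist (x n) (y n) / 2 ^ (n + 1)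

/-- The metric `D(x,y) = sup_{n ∈ ℤ} d(x_n, y_n)/2^{|n|}` on two-sided sequences. -/
noncomputable def DTwo {X : Type*} [PseudoMetricSpace X] (x y : ℤ → X) : ℝ :=
  ⨆ n : ℤ, dist (x n) (y n) / 2 ^ n.natAbs

/-- Topological transitivity. -/
def TopTransitive {Y : Type*} [TopologicalSpace Y] (f : Y → Y) : Prop :=
  ∀ U V : Set Y, IsOpen U → IsOpen V → U.Nonempty → V.Nonempty →
    ∃ n : ℕ, (f^[n] '' U ∩ V).Nonempty

/-- Topological mixing. -/
def TopMixing {Y : Type*} [TopologicalSpace Y] (f : Y → Y) : Prop :=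
  ∀ U V : Set Y, IsOpen U → IsOpen V → U.Nonempty → V.Nonempty →
    ∃ n₀ : ℕ, ∀ n : ℕ, n₀ ≤ n → (f^[n] '' U ∩ V).Nonempty

/-- The shadowing property for a map `f` with respect to a distance `dY`. -/
def ShadowingProp {Y : Type*} (dY : Y → Y → ℝ) (f : Y → Y) : Prop :=
  ∀ ε : ℝ, 0 < ε → ∃ δ : ℝ, 0 < δ ∧ ∀ x : ℕ → Y,
    (∀ k : ℕ, dY (f (x k)) (x (k + 1)) < δ) →
    ∃ y : Y, ∀ k : ℕ, dY (f^[k] y) (x k) < ε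

/-- The specification property for a map `f` with respect to a distance `dY`. -/
def SpecProp {Y : Type*} (dY : Y → Y → ℝ) (f : Y → Y) : Prop :=
  ∀ ε : ℝ, 0 < ε → ∃ N : ℕ, 0 < N ∧ ∀ n : ℕ, 0 < n →
    ∀ x : Fin n → Y, ∀ k l : Fin n → ℕ,
      (∀ i, k i ≤ l i) →
      (∀ i j : Fin n, (i : ℕ) + 1 = (j : ℕ) → l i + N ≤ k j) →
      ∃ y : Y, ∀ i : Fin n, ∀ m : ℕ, k i ≤ m → m ≤ l i →
        dY (f^[m] y) (f^[m] (x i)) ≤ ε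

/-- The CR-specification property for the one-sided Mahavier product of `F`. -/
def CRSpec {X : Type*} [PseudoMetricSpace X] (F : Set (X × X)) : Prop :=
  ∀ ε : ℝ, 0 < ε → ∃ N : ℕ, 0 < N ∧ ∀ n : ℕ, 0 < n →
    ∀ x : Fin n → MahavierPlus F, ∀ k l : Fin n → ℕ,
      (∀ i, k i ≤ l i) →
      (∀ i j : Fin n, (i : ℕ) + 1 = (j : ℕ) → l i + N ≤ k j) →
      ∃ y : MahavierPlus F, ∀ i : Fin n, ∀ m : ℕ, k i ≤ m → m ≤ l i →
        dist ((x i : ℕ → X) m) ((y : ℕ → X) m) ≤ ε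

/-- The image of a set under a relation. -/
def relImage {X : Type*} (F : Set (X × X)) (A : Set X) : Set X :=
  {y | ∃ a ∈ A, (a, y) ∈ F}

/-- Composition of relations. -/
def relComp {X : Type*} (F G : Set (X × X)) : Set (X × X) :=
  {p | ∃ z : X, (p.1, z) ∈ F ∧ (z, p.2) ∈ G}

/-- Iterated composition `F^n` of a relation with itself. -/
def relPow {X : Type*} (F : Set (X × X)) : ℕ → Set (X × X)
  | 0 => {p | p.1 = p.2}
  | n + 1 => relComp (relPow F n) F

/-- Membership in the family `𝓕`: `G = F_A` for some finite set `A` of positive reals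
containing `3`, `1`, and `1/2`, all of whose elements lie in `[1/3, 3]`, where
`F_A = {(x,y) ∈ [0,1]² : y = a·x for some a ∈ A}`. -/
def MemFamF (G : Set (ℝ × ℝ)) : Prop :=
  ∃ A : Finset ℝ, (3 : ℝ) ∈ A ∧ (1 : ℝ) ∈ A ∧ (1 / 2 : ℝ) ∈ A ∧
    (∀ a ∈ A, (1 / 3 : ℝ) ≤ a ∧ a ≤ 3) ∧
    G = {p : ℝ × ℝ | p.1 ∈ Set.Icc (0 : ℝ) 1 ∧ p.2 ∈ Set.Icc (0 : ℝ) 1 ∧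
          ∃ a ∈ A, p.2 = a * p.1}

/-!
`F_A` is invariant under scaling by `c ∈ [0, 1]` and contains the steps `u ↦ u`, `u ↦ u / 2`,
`u ↦ 3 u`. An orbit segment is first replaced by a chain that agrees with it between the first and
the last time it is `≥ δ` and is constant (`x m₁ / 3` before, `x m₀ / 2` after) elsewhere; this
moves it by at most `2 δ` and makes both ends `≥ δ / 3`. Two chains with ends `u, v ∈ [θ, 1]` are
joined across any gap of length `≥ N` by halving `q` times and tripling `p` times, where
`3 ^ p / 2 ^ q ∈ [(1 - δ) v / u, v / u]`; rescaling the later chain by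
`c = u 3 ^ p / (2 ^ q v) ∈ [1 - δ, 1]` makes the junction exact. Such `p, q` exist with `p + q`
bounded uniformly in `v / u ∈ [θ, θ⁻¹]` because `p log 3 - q log 2` is never `0` for `p > 0`, so by
Dirichlet's theorem these numbers form arbitrarily fine nets of compact intervals.
-/

lemma three_pow_ne_two_pow {p : ℕ} (hp : 0 < p) (q : ℕ) : 3 ^ p ≠ 2 ^ q := by
  intro h
  have h3 : 3 ∣ 2 ^ q := h ▸ dvd_pow_self 3 hp.ne'
  have := Nat.prime_three.dvd_of_dvd_pow h3
  omega

lemma nat_mul_log_three_ne_nat_mul_log_two {p : ℕ} (hp : 0 < p) (q : ℕ) :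
    (p : ℝ) * Real.log 3 ≠ q * Real.log 2 := by
  rw [← Real.log_pow, ← Real.log_pow]
  intro h
  have h' : ((3 ^ p : ℕ) : ℝ) = ((2 ^ q : ℕ) : ℝ) := by
    push_cast
    exact Real.log_injOn_pos (by simp) (by simp) h
  exact three_pow_ne_two_pow hp q (by exact_mod_cast h')

lemma nat_floor_div_mul_mem_Ioc {s g : ℝ} (hs : 0 ≤ s) (hg : 0 < g) :
    ⌊s / g⌋₊ * g ∈ Ioc (s - g) s := by
  have h1 := Nat.lt_floor_add_one (s / g)
  have h2 := Nat.floor_le (div_nonneg hs hg.le)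
  rw [div_lt_iff₀ hg] at h1
  rw [le_div_iff₀ hg] at h2
  constructor <;> linarith

lemma exists_nat_mul_sub_nat_mul_mem_Ioc {a b η : ℝ} (ha : 0 < a) (hb : 0 < b)
    (hab : ∀ p q : ℕ, 0 < p → p * a ≠ q * b) (hη : 0 < η) :
    ∃ p q : ℕ, p * a - q * b ∈ Ioc 0 η := by
  -- Dirichlet gives a small nonzero `g = k a - j b`; if `g < 0`, then `a + ⌊a / |g|⌋ g` is small
  -- and positive.
  obtain ⟨n, hn⟩ := exists_nat_gt (b / η)
  have hn0 : (0 : ℝ) < n := (div_pos hb hη).trans hn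
  obtain ⟨j, k, hk, -, hjk⟩ :=
    Real.exists_int_int_abs_mul_sub_le (a / b) (n := n) (by exact_mod_cast hn0)
  have hsmall : |k * a - j * b| < η := by
    have : k * a - j * b = b * (k * (a / b) - j) := by field_simp
    rw [this, abs_mul, abs_of_pos hb]
    calc b * |k * (a / b) - j| ≤ b * (1 / (n + 1)) := by gcongr
      _ < η := by
        rw [div_lt_iff₀ hη] at hn
        rw [mul_one_div, div_lt_iff₀ (by positivity)]
        linarith
  have hj : 0 ≤ j := by
    have hk' : (0 : ℝ) < k := by exact_mod_cast hk
    have h1 : 1 / ((n : ℝ) + 1) < 1 := by rw [div_lt_one (by positivity)]; linarith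
    have : (-1 : ℝ) < j := by linarith [(abs_le.1 hjk).2, mul_pos hk' (div_pos ha hb)]
    have : (-1 : ℤ) < j := by exact_mod_cast this
    omega
  lift k to ℕ using hk.le
  lift j to ℕ using hj
  push_cast at hsmall
  have hne := sub_ne_zero.2 (hab k j (by exact_mod_cast hk))
  set g := (k : ℝ) * a - j * b
  rcases hne.lt_or_gt with hneg | hpos
  · obtain ⟨h1, h2⟩ := nat_floor_div_mul_mem_Ioc ha.le (neg_pos.2 hneg)
    set i := ⌊a / -g⌋₊
    have hval : ((1 + i * k : ℕ) : ℝ) * a - (i * j : ℕ) * b = a - i * -g := by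
      push_cast; ring
    refine ⟨1 + i * k, i * j, ?_, ?_⟩
    · refine lt_of_le_of_ne ?_ (sub_ne_zero.2 (hab _ _ (by omega))).symm
      linarith
    · linarith [neg_abs_le g]
  · exact ⟨k, j, hpos, (le_abs_self _).trans hsmall.le⟩

lemma exists_nat_mul_sub_nat_mul_mem_Icc {a b η : ℝ} (ha : 0 < a) (hb : 0 < b)
    (hab : ∀ p q : ℕ, 0 < p → p * a ≠ q * b) (hη : 0 < η) (lo hi : ℝ) :
    ∃ N : ℕ, ∀ t ∈ Icc lo hi, ∃ p q : ℕ, p + q ≤ N ∧ p * a - q * b ∈ Icc (t - η) t := by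
  obtain ⟨p₀, q₀, hg, hgη⟩ := exists_nat_mul_sub_nat_mul_mem_Ioc ha hb hab hη
  set g := (p₀ : ℝ) * a - q₀ * b
  obtain ⟨M, hM⟩ := exists_nat_ge (-lo / b)
  rw [div_le_iff₀ hb] at hM
  refine ⟨⌈(hi + M * b) / g⌉₊ * (p₀ + q₀) + M, fun t ht => ?_⟩
  obtain ⟨h1, h2⟩ := nat_floor_div_mul_mem_Ioc (s := t + M * b) (by linarith [ht.1]) hg
  set i := ⌊(t + M * b) / g⌋₊
  have hi : i ≤ ⌈(hi + M * b) / g⌉₊ :=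
    (Nat.floor_le_floor (by gcongr; exact ht.2)).trans (Nat.floor_le_ceil _)
  have hval : ((i * p₀ : ℕ) : ℝ) * a - (i * q₀ + M : ℕ) * b = i * g - M * b := by
    push_cast; ring
  refine ⟨i * p₀, i * q₀ + M, by nlinarith, ?_, ?_⟩ <;> linarith

lemma exists_three_pow_div_two_pow_mem_Icc {δ : ℝ} (hδ₀ : 0 < δ) (hδ₁ : δ < 1) {lo : ℝ}
    (hlo : 0 < lo) (hi : ℝ) :
    ∃ N : ℕ, ∀ r ∈ Icc lo hi, ∃ p q : ℕ, p + q ≤ N ∧ (3 : ℝ) ^ p / 2 ^ q ∈ Icc ((1 - δ) * r) r := by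
  obtain ⟨N, hN⟩ := exists_nat_mul_sub_nat_mul_mem_Icc (Real.log_pos (by norm_num : (1 : ℝ) < 3))
    (Real.log_pos (by norm_num : (1 : ℝ) < 2))
    (fun p _ hp => nat_mul_log_three_ne_nat_mul_log_two hp _) (η := -Real.log (1 - δ))
    (neg_pos.2 (Real.log_neg (by linarith) (by linarith))) (Real.log lo) (Real.log hi)
  refine ⟨N, fun r hr => ?_⟩
  have hr₀ : 0 < r := hlo.trans_le hr.1
  obtain ⟨p, q, hpq, h₁, h₂⟩ :=
    hN (Real.log r) ⟨Real.log_le_log hlo hr.1, Real.log_le_log hr₀ hr.2⟩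
  have hexp : Real.exp (p * Real.log 3 - q * Real.log 2) = 3 ^ p / 2 ^ q := by
    rw [Real.exp_sub, Real.exp_nat_mul, Real.exp_nat_mul, Real.exp_log (by norm_num),
      Real.exp_log (by norm_num)]
  refine ⟨p, q, hpq, ?_, ?_⟩
  · rw [← hexp, ← Real.exp_log hr₀, ← Real.exp_log (by linarith : 0 < 1 - δ), ← Real.exp_add]
    exact Real.exp_le_exp.2 (by linarith)
  · rw [← hexp, ← Real.exp_log hr₀]
    exact Real.exp_le_exp.2 h₂

lemma abs_mul_sub_le_of_mem_Icc {c w y δ : ℝ} (hc : c ∈ Icc (1 - δ) 1) (hw : w ∈ Icc 0 1) :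
    |c * w - y| ≤ δ + |w - y| := by
  have hcw : |c * w - w| ≤ δ := by
    have : (1 - c) * w ≤ δ * 1 :=
      mul_le_mul (by linarith [hc.1]) hw.2 hw.1 (by linarith [hc.1, hc.2])
    rw [abs_sub_comm, abs_of_nonneg (by nlinarith [hc.2, hw.1])]
    linarith
  calc |c * w - y| ≤ |c * w - w| + |w - y| := abs_sub_le _ _ _
    _ ≤ δ + |w - y| := by linarith

def splice {X : Type*} (x y : ℕ → X) (n : ℕ) : ℕ → X := fun m => if m < n then x m else y m

section Splice

variable {X : Type*} {x y : ℕ → X} {n m : ℕ}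

lemma splice_of_lt (hm : m < n) : splice x y n m = x m := if_pos hm

lemma splice_of_ge (hm : n ≤ m) : splice x y n m = y m := if_neg hm.not_gt

lemma splice_of_le (h : x n = y n) (hm : m ≤ n) : splice x y n m = x m := by
  rcases hm.lt_or_eq with hm | rfl
  · exact splice_of_lt hm
  · exact (splice_of_ge le_rfl).trans h.symm

lemma splice_mem_mahavierPlus {R : Set (X × X)} (hx : x ∈ MahavierPlus R)
    (hy : y ∈ MahavierPlus R) (h : x n = y n) : splice x y n ∈ MahavierPlus R := by
  intro m
  rcases lt_or_ge (m + 1) n with hm | hm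
  · rw [splice_of_lt hm, splice_of_lt (by omega)]
    exact hx m
  · rw [splice_of_ge hm]
    rcases hm.eq_or_lt with hm | hm
    · rw [splice_of_lt (by omega), ← hm, ← h, hm]
      exact hx m
    · rw [splice_of_ge (by omega)]
      exact hy m

end Splice

def IsScaledGlueGap (R : Set (ℝ × ℝ)) (δ θ : ℝ) (N : ℕ) : Prop :=
  ∀ f ∈ MahavierPlus R, ∀ w ∈ MahavierPlus R, ∀ L K : ℕ, L + N ≤ K → θ ≤ f L → θ ≤ w K →
    ∃ c ∈ Icc (1 - δ) 1, ∃ g ∈ MahavierPlus R,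
      (∀ m ≤ L, g m = f m) ∧ ∀ m, K ≤ m → g m = c * w m

def linRel (A : Set ℝ) : Set (ℝ × ℝ) :=
  {p | p.1 ∈ Icc 0 1 ∧ p.2 ∈ Icc 0 1 ∧ ∃ a ∈ A, p.2 = a * p.1}

namespace linRel

variable {A : Set ℝ} {a b c u v δ : ℝ} {x : ℕ → ℝ} {k l : ℕ}

lemma mk_mul_mem (ha : a ∈ A) (hu : u ∈ Icc 0 1) (hau : a * u ∈ Icc 0 1) :
    (u, a * u) ∈ linRel A :=
  ⟨hu, hau, a, ha, rfl⟩

lemma mk_self_mem (h1 : 1 ∈ A) (hu : u ∈ Icc 0 1) : (u, u) ∈ linRel A :=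
  ⟨hu, hu, 1, h1, (one_mul u).symm⟩

lemma snd_le_three_mul_fst (hA : ∀ a ∈ A, a ≤ 3) (h : (u, v) ∈ linRel A) : v ≤ 3 * u := by
  obtain ⟨⟨hu, -⟩, -, a, ha, hv : v = a * u⟩ := h
  subst hv
  exact mul_le_mul_of_nonneg_right (hA a ha) hu

lemma fst_le_three_mul_snd (hA : ∀ a ∈ A, 1 / 3 ≤ a) (h : (u, v) ∈ linRel A) : u ≤ 3 * v := by
  obtain ⟨⟨hu, -⟩, -, a, ha, hv : v = a * u⟩ := h
  subst hv
  nlinarith [hA a ha]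

lemma mul_mem (hc : c ∈ Icc 0 1) (h : (u, v) ∈ linRel A) : (c * u, c * v) ∈ linRel A := by
  obtain ⟨hu, hv, a, ha, hva : v = a * u⟩ := h
  subst hva
  exact ⟨⟨by nlinarith [hc.1, hu.1], by nlinarith [hc.1, hc.2, hu.1, hu.2]⟩,
    ⟨by nlinarith [hc.1, hv.1], by nlinarith [hc.1, hc.2, hv.1, hv.2]⟩, a, ha, by ring⟩

lemma mem_Icc_of_mem_mahavierPlus (hx : x ∈ MahavierPlus (linRel A)) (m : ℕ) :
    x m ∈ Icc 0 1 :=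
  (hx m).1

lemma const_mul_mem_mahavierPlus (hc : c ∈ Icc 0 1) (hx : x ∈ MahavierPlus (linRel A)) :
    (fun m => c * x m) ∈ MahavierPlus (linRel A) :=
  fun m => mul_mem hc (hx m)

lemma const_mem_mahavierPlus (h1 : 1 ∈ A) (hu : u ∈ Icc 0 1) :
    (fun _ => u) ∈ MahavierPlus (linRel A) :=
  fun _ => mk_self_mem h1 hu

lemma mul_pow_min_sub_mem_mahavierPlus (h1 : 1 ∈ A) (hb : b ∈ A) (hb₀ : 0 ≤ b) (hb₁ : b ≤ 1)
    (hu : u ∈ Icc 0 1) (n s : ℕ) :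
    (fun t => u * b ^ min n (t - s)) ∈ MahavierPlus (linRel A) := by
  have hmem : ∀ e : ℕ, u * b ^ e ∈ Icc 0 1 := fun e =>
    ⟨mul_nonneg hu.1 (pow_nonneg hb₀ e),
      (mul_le_of_le_one_right hu.1 (pow_le_one₀ hb₀ hb₁)).trans hu.2⟩
  intro t
  dsimp only
  rcases (by omega : min n (t + 1 - s) = min n (t - s) ∨ min n (t + 1 - s) = min n (t - s) + 1)
    with h | h
  · rw [h]
    exact mk_self_mem h1 (hmem _)
  · have : u * b ^ min n (t + 1 - s) = b * (u * b ^ min n (t - s)) := by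
      rw [h, pow_succ]; ring
    rw [this]
    exact mk_mul_mem hb (hmem _) (this ▸ hmem _)

lemma div_pow_min_sub_mem_mahavierPlus (h1 : 1 ∈ A) (hb : b ∈ A) (hb₁ : 1 ≤ b)
    (hu : u ∈ Icc 0 1) (n s : ℕ) :
    (fun t => u / b ^ min n (s - t)) ∈ MahavierPlus (linRel A) := by
  have hmem : ∀ e : ℕ, u / b ^ e ∈ Icc 0 1 := fun e =>
    ⟨div_nonneg hu.1 (by positivity), (div_le_self hu.1 (one_le_pow₀ hb₁)).trans hu.2⟩
  intro t
  dsimp only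
  rcases (by omega : min n (s - t) = min n (s - (t + 1)) ∨ min n (s - t) = min n (s - (t + 1)) + 1)
    with h | h
  · rw [h]
    exact mk_self_mem h1 (hmem _)
  · have hb₀ : b ≠ 0 := by positivity
    have : u / b ^ min n (s - (t + 1)) = b * (u / b ^ min n (s - t)) := by
      rw [h, pow_succ]; field_simp
    rw [this]
    exact mk_mul_mem hb (hmem _) (this ▸ hmem _)

lemma exists_window_approx_of_first_last (h1 : 1 ∈ A) (h3 : 3 ∈ A) (hhalf : 1 / 2 ∈ A)
    (hA : ∀ a ∈ A, 1 / 3 ≤ a ∧ a ≤ 3) (hδ : 0 ≤ δ) (hx : x ∈ MahavierPlus (linRel A))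
    {m₁ m₀ : ℕ} (hkm₁ : k ≤ m₁) (hm₁m₀ : m₁ ≤ m₀) (hm₀l : m₀ ≤ l) (hxm₁ : δ ≤ x m₁)
    (hxm₀ : δ ≤ x m₀) (hbefore : ∀ m, k ≤ m → m < m₁ → x m < δ)
    (hafter : ∀ m, m₀ < m → m ≤ l → x m < δ) :
    ∃ w ∈ MahavierPlus (linRel A),
      (∀ m, k ≤ m → m ≤ l → |w m - x m| ≤ 2 * δ) ∧ δ / 3 ≤ w k ∧ δ / 3 ≤ w l := by
  have hI := mem_Icc_of_mem_mahavierPlus hx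
  set front := splice (fun t => x m₁ / 3 ^ min 1 (m₁ - t)) x m₁ with hfront_def
  have hfront : front ∈ MahavierPlus (linRel A) :=
    splice_mem_mahavierPlus (div_pow_min_sub_mem_mahavierPlus h1 h3 (by norm_num) (hI m₁) 1 m₁)
      hx (by simp)
  have hfront_m₀ : front m₀ = x m₀ := splice_of_ge hm₁m₀
  set w := splice front (fun t => x m₀ * (1 / 2) ^ min 1 (t - m₀)) m₀ with hw_def
  have hw_lt : ∀ m, m < m₁ → w m = x m₁ / 3 := fun m hm => by
    rw [hw_def, splice_of_lt (hm.trans_le hm₁m₀), hfront_def, splice_of_lt hm,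
      Nat.min_eq_left (by omega), pow_one]
  have hw_mid : ∀ m, m₁ ≤ m → m ≤ m₀ → w m = x m := fun m hm hm' => by
    rw [hw_def, splice_of_le (by simp [hfront_m₀]) hm', hfront_def, splice_of_ge hm]
  have hw_gt : ∀ m, m₀ < m → w m = x m₀ / 2 := fun m hm => by
    rw [hw_def, splice_of_ge hm.le, Nat.min_eq_left (by omega)]
    ring
  refine ⟨w, splice_mem_mahavierPlus hfront
    (mul_pow_min_sub_mem_mahavierPlus h1 hhalf (by norm_num) (by norm_num) (hI m₀) 1 m₀)
    (by simp [hfront_m₀]), fun m hkm hml => ?_, ?_, ?_⟩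
  · rcases lt_or_ge m m₁ with hm | hm
    · have hprev := snd_le_three_mul_fst (fun a ha => (hA a ha).2) (hx (m₁ - 1))
      rw [Nat.sub_add_cancel (by omega)] at hprev
      rw [hw_lt m hm, abs_le]
      constructor <;> linarith [hbefore m hkm hm, hbefore (m₁ - 1) (by omega) (by omega),
        (hI m).1]
    rcases le_or_gt m m₀ with hm' | hm'
    · rw [hw_mid m hm hm', sub_self, abs_zero]
      positivity
    · have hnext := fst_le_three_mul_snd (fun a ha => (hA a ha).1) (hx m₀)
      rw [hw_gt m hm', abs_le]
      constructor <;> linarith [hafter m hm' hml, hafter (m₀ + 1) (by omega) (by omega),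
        (hI m).1]
  · rcases hkm₁.lt_or_eq with hk | hk
    · rw [hw_lt k hk]
      linarith
    · rw [hk, hw_mid m₁ le_rfl hm₁m₀]
      linarith
  · rcases hm₀l.lt_or_eq with hl | hl
    · rw [hw_gt l hl]
      linarith
    · rw [← hl, hw_mid m₀ hm₁m₀ le_rfl]
      linarith

lemma exists_window_approx (h1 : 1 ∈ A) (h3 : 3 ∈ A) (hhalf : 1 / 2 ∈ A)
    (hA : ∀ a ∈ A, 1 / 3 ≤ a ∧ a ≤ 3) (hδ₀ : 0 < δ) (hδ₁ : δ ≤ 1)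
    (hx : x ∈ MahavierPlus (linRel A)) :
    ∃ w ∈ MahavierPlus (linRel A),
      (∀ m, k ≤ m → m ≤ l → |w m - x m| ≤ 2 * δ) ∧ δ / 3 ≤ w k ∧ δ / 3 ≤ w l := by
  classical
  by_cases hbig : ∃ m, k ≤ m ∧ m ≤ l ∧ δ ≤ x m
  · obtain ⟨hkm₁, hm₁l, hxm₁⟩ := Nat.find_spec hbig
    obtain ⟨hkm₀, hxm₀⟩ := Nat.findGreatest_spec (P := fun m => k ≤ m ∧ δ ≤ x m) hm₁l
      ⟨hkm₁, hxm₁⟩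
    refine exists_window_approx_of_first_last h1 h3 hhalf hA hδ₀.le hx hkm₁
      (Nat.le_findGreatest hm₁l ⟨hkm₁, hxm₁⟩) (Nat.findGreatest_le l) hxm₁ hxm₀
      (fun m hkm hm => ?_) (fun m hm hml => ?_)
    · by_contra! h
      exact Nat.find_min hbig hm ⟨hkm, by omega, h⟩
    · by_contra! h
      exact Nat.findGreatest_is_greatest hm hml ⟨by omega, h⟩
  · push Not at hbig
    refine ⟨fun _ => δ / 2, const_mem_mahavierPlus h1 ⟨by linarith, by linarith⟩,
      fun m hkm hml => ?_, by linarith, by linarith⟩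
    rw [abs_le]
    constructor <;> linarith [hbig m hkm hml, (mem_Icc_of_mem_mahavierPlus hx m).1]

lemma exists_bridge (h1 : 1 ∈ A) (h3 : 3 ∈ A) (hhalf : 1 / 2 ∈ A) (hu : u ∈ Icc 0 1)
    {p q L K : ℕ} (hLK : L + (p + q) ≤ K) (hX : u * 3 ^ p / 2 ^ q ≤ 1) :
    ∃ β ∈ MahavierPlus (linRel A), β L = u ∧ β K = u * 3 ^ p / 2 ^ q := by
  have hX₀ : u * 3 ^ p / 2 ^ q ∈ Icc 0 1 := ⟨by have := hu.1; positivity, hX⟩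
  have hagree : u * (1 / 2) ^ min q (L + q - L) = u * 3 ^ p / 2 ^ q / 3 ^ min p (K - (L + q)) := by
    rw [Nat.min_eq_left (by omega), Nat.min_eq_left (by omega), one_div, inv_pow]
    field_simp
  refine ⟨splice (fun t => u * (1 / 2) ^ min q (t - L))
    (fun t => u * 3 ^ p / 2 ^ q / 3 ^ min p (K - t)) (L + q),
    splice_mem_mahavierPlus (mul_pow_min_sub_mem_mahavierPlus h1 hhalf (by norm_num)
      (by norm_num) hu q L) (div_pow_min_sub_mem_mahavierPlus h1 h3 (by norm_num) hX₀ p K)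
      hagree, ?_, ?_⟩
  · rw [splice_of_le hagree (by omega)]
    simp
  · rw [splice_of_ge (by omega)]
    simp

lemma exists_isScaledGlueGap (h1 : 1 ∈ A) (h3 : 3 ∈ A) (hhalf : 1 / 2 ∈ A)
    {θ : ℝ} (hδ₀ : 0 < δ) (hδ₁ : δ < 1) (hθ : 0 < θ) :
    ∃ N, IsScaledGlueGap (linRel A) δ θ N := by
  obtain ⟨N, hN⟩ := exists_three_pow_div_two_pow_mem_Icc hδ₀ hδ₁ hθ θ⁻¹
  refine ⟨N, fun f hf w hw L K hLK hfL hwK => ?_⟩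
  have hu := mem_Icc_of_mem_mahavierPlus hf L
  have hv := mem_Icc_of_mem_mahavierPlus hw K
  have hu₀ : 0 < f L := hθ.trans_le hfL
  have hv₀ : 0 < w K := hθ.trans_le hwK
  obtain ⟨p, q, hpq, hX₁, hX₂⟩ := hN (w K / f L)
    ⟨by rw [le_div_iff₀ hu₀]; nlinarith [hu.2], by
      rw [div_le_iff₀ hu₀, inv_mul_eq_div, le_div_iff₀ hθ]; nlinarith [hv.2]⟩
  have hcomm : (3 : ℝ) ^ p / 2 ^ q * f L = f L * 3 ^ p / 2 ^ q := by ring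
  rw [le_div_iff₀ hu₀, hcomm] at hX₂
  rw [mul_div_assoc', div_le_iff₀ hu₀, hcomm] at hX₁
  obtain ⟨β, hβ, hβ_L, hβ_K⟩ :=
    exists_bridge h1 h3 hhalf hu (L := L) (K := K) (by omega) (hX₂.trans hv.2)
  set c := f L * 3 ^ p / 2 ^ q / w K
  have hc : c ∈ Icc (1 - δ) 1 := ⟨by rw [le_div_iff₀ hv₀]; exact hX₁, (div_le_one hv₀).2 hX₂⟩
  have hβ_K' : β K = c * w K := by rw [hβ_K, div_mul_cancel₀ _ hv₀.ne']
  have hglued_L : splice β (fun m => c * w m) K L = f L := by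
    rw [splice_of_le hβ_K' (by omega), hβ_L]
  refine ⟨c, hc, splice f (splice β (fun m => c * w m) K) L, splice_mem_mahavierPlus hf
    (splice_mem_mahavierPlus hβ (const_mul_mem_mahavierPlus ⟨by linarith [hc.1], hc.2⟩ hw)
      hβ_K') hglued_L.symm, fun m hm => splice_of_le hglued_L.symm hm, fun m hm => ?_⟩
  rw [splice_of_ge (by omega), splice_of_ge hm]

lemma exists_approx_windows (h1 : 1 ∈ A) (h3 : 3 ∈ A) (hhalf : 1 / 2 ∈ A)
    (hA : ∀ a ∈ A, 1 / 3 ≤ a ∧ a ≤ 3) (hδ₀ : 0 < δ) (hδ₁ : δ ≤ 1 / 2) {N : ℕ}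
    (hN : IsScaledGlueGap (linRel A) δ (δ / 6) N) {n : ℕ} (x : Fin (n + 1) → ℕ → ℝ)
    (hx : ∀ i, x i ∈ MahavierPlus (linRel A)) (k l : Fin (n + 1) → ℕ) (hkl : ∀ i, k i ≤ l i)
    (hsep : ∀ i : Fin n, l i.castSucc + N ≤ k i.succ) (i : Fin (n + 1)) :
    ∃ f ∈ MahavierPlus (linRel A), (∀ j ≤ i, ∀ m, k j ≤ m → m ≤ l j → |f m - x j m| ≤ 3 * δ) ∧
      δ / 6 ≤ f (l i) := by
  have hl : Monotone l := Fin.monotone_iff_le_succ.2 fun i =>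
    (Nat.le_add_right _ _).trans ((hsep i).trans (hkl _))
  induction i using Fin.induction with
  | zero =>
    obtain ⟨w, hw, hw_close, -, hw_l⟩ :=
      exists_window_approx h1 h3 hhalf hA hδ₀ (by linarith) (hx 0) (k := k 0) (l := l 0)
    refine ⟨w, hw, fun j hj m hkm hml => ?_, by linarith⟩
    rw [Fin.le_zero_iff.1 hj] at hkm hml ⊢
    linarith [hw_close m hkm hml]
  | succ i ih =>
    obtain ⟨f, hf, hf_close, hf_l⟩ := ih
    obtain ⟨w, hw, hw_close, hw_k, hw_l⟩ :=
      exists_window_approx h1 h3 hhalf hA hδ₀ (by linarith) (hx i.succ) (k := k i.succ)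
        (l := l i.succ)
    obtain ⟨c, hc, g, hg, hg_f, hg_w⟩ := hN f hf w hw _ _ (hsep i) hf_l (by linarith)
    refine ⟨g, hg, fun j hj m hkm hml => ?_, ?_⟩
    · rcases hj.lt_or_eq with hj | rfl
      · have hj' := Fin.le_castSucc_iff.2 hj
        rw [hg_f m (hml.trans (hl hj'))]
        exact hf_close j hj' m hkm hml
      · rw [hg_w m hkm]
        linarith [abs_mul_sub_le_of_mem_Icc (y := x i.succ m) hc
          (mem_Icc_of_mem_mahavierPlus hw m), hw_close m hkm hml]
    · rw [hg_w _ (hkl _)]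
      nlinarith [hc.1]

theorem crSpec (h1 : 1 ∈ A) (h3 : 3 ∈ A) (hhalf : 1 / 2 ∈ A)
    (hA : ∀ a ∈ A, 1 / 3 ≤ a ∧ a ≤ 3) : CRSpec (linRel A) := by
  intro ε hε
  set δ := min (ε / 3) (1 / 2)
  have hδ₀ : 0 < δ := lt_min (by linarith) (by norm_num)
  obtain ⟨N, hN⟩ := exists_isScaledGlueGap h1 h3 hhalf hδ₀
    ((min_le_right _ _).trans_lt (by norm_num)) (by positivity : 0 < δ / 6)
  refine ⟨N + 1, N.succ_pos, fun n hn x k l hkl hsep => ?_⟩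
  obtain ⟨n, rfl⟩ := Nat.exists_eq_add_one_of_ne_zero hn.ne'
  obtain ⟨f, hf, hf_close, -⟩ := exists_approx_windows h1 h3 hhalf hA hδ₀ (min_le_right _ _) hN
    (fun i => x i) (fun i => (x i).2) k l hkl
    (fun i => by have := hsep i.castSucc i.succ (by simp); omega) (Fin.last n)
  refine ⟨⟨f, hf⟩, fun i m hkm hml => ?_⟩
  rw [Real.dist_eq, abs_sub_comm]
  linarith [hf_close i (Fin.le_last i) m hkm hml, min_le_left (ε / 3) (1 / 2)]

end linRel

/-- For every `G ∈ 𝓕`, the one-sided Mahavier product `I_G^+` has the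
CR-specification property. -/
theorem stmt10 (G : Set (ℝ × ℝ)) (hG : MemFamF G) : CRSpec G := by
  obtain ⟨A, h3, h1, hhalf, hA, rfl⟩ := hG
  exact linRel.crSpec (A := (A : Set ℝ)) h1 h3 hhalf hA
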